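/- Let Y be a two-level ±1 design that is an OA(N,k,2,t) with N = λ·2^t, λ odd, and k ≥ t + 3, and let r ≥ 1 with t + r ≤ k − 1. Suppose the column i ∈ Fin k minimizes Σ_{l ⊆ Fin k ∖ {i}, |l| = t+r} J(l)² over all columns, i.e., Σ_{l ⊆ Fin k ∖ {i}, |l| = t+r} J(l)² ≤ Σ_{l ⊆ Fin k ∖ {j'}, |l| = t+r} J(l)² for every column j'. Then, with S = Σ_{l ⊆ Fin k, |l| = t+r} J(l)², one has Σ_{l ⊆ Fin k ∖ {i}, |l| = t+r} J(l)² ≤ φ₂(t,t+r) · ⌊( ((k − t − r)/k)·S − φ₁(k−1,t,t+r) ) / φ₂(t,t+r)⌋ + φ₁(k−1,t,t+r), where the floor is taken of the rational number inside. -/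

import Mathlib

/-!
Writing each entry as `y = 1 - 2·[y = -1]` expands `J(l)` as
`∑_{S ⊆ l} (-2)^|S| · #{rows equal to -1 on S}`. Strength `t` fixes the terms with `|S| ≤ t`,
which sum to `(-1)^t C(|l|-1, t) N`, and the other terms are divisible by `2^(t+1)`. With
`N = λ 2^t`, `λ` odd, this gives `J(l)² ≡ I(t,|l|) 2^(2t) (mod φ₂)` (an odd square is `1 mod 8`),
so the column sum `A_i = ∑_{i ∉ l} J(l)²` is `≡ φ₁(k-1,t,t+r) (mod φ₂)`. Counting pairs
`(j, l)` with `j ∉ l` gives `∑_j A_j = (k - t - r) S`, so the minimal `A_i` is at most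
`(k - t - r) S / k`, and the congruence lets us round down to the stated bound.
-/

/-- All entries of `Y` are `1` or `-1`. -/
def isPM {N k : ℕ} (Y : Fin N → Fin k → ℤ) : Prop :=
  ∀ i j, Y i j = 1 ∨ Y i j = -1

/-- `Y` is a two-level orthogonal array OA(N,k,2,t): for every `t`-element set `T` of
columns and every `±1` sign pattern `ε`, the number of rows matching `ε` on `T`
equals `N / 2^t` (equivalently, the count times `2^t` equals `N`). -/
def isOA2 (N k t : ℕ) (Y : Fin N → Fin k → ℤ) : Prop :=
  ∀ T : Finset (Fin k), T.card = t →
    ∀ ε : Fin k → ℤ, (∀ j, ε j = 1 ∨ ε j = -1) →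
      (Finset.univ.filter (fun i : Fin N => ∀ j ∈ T, Y i j = ε j)).card * 2 ^ t = N

/-- The `J`-characteristic of the set of columns `l`. -/
def Jchar {N k : ℕ} (Y : Fin N → Fin k → ℤ) (l : Finset (Fin k)) : ℤ :=
  ∑ i : Fin N, ∏ j ∈ l, Y i j

/-- `I(t,j) = 1` if `C(j-1, j-t-1)` is odd and `0` otherwise. -/
def Ioa (t j : ℕ) : ℕ := if Odd ((j - 1).choose (j - t - 1)) then 1 else 0

/-- `φ₁(k,t,j) = I(t,j)·C(k,j)·2^{2t}`. -/
def phi1 (k t j : ℕ) : ℕ := Ioa t j * k.choose j * 2 ^ (2 * t)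

/-- `φ₂(t,j) = 2^{2t+2+I(t,j)}`. -/
def phi2 (t j : ℕ) : ℕ := 2 ^ (2 * t + 2 + Ioa t j)

open Finset

def matchingRows {N k : ℕ} (Y : Fin N → Fin k → ℤ) (S : Finset (Fin k)) (ε : Fin k → ℤ) :
    Finset (Fin N) :=
  univ.filter fun i => ∀ c ∈ S, Y i c = ε c

lemma matchingRows_insert_update {N k : ℕ} (Y : Fin N → Fin k → ℤ) {S : Finset (Fin k)}
    {c : Fin k} (hc : c ∉ S) (ε : Fin k → ℤ) (v : ℤ) :
    matchingRows Y (insert c S) (Function.update ε c v) =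
      (matchingRows Y S ε).filter fun i => Y i c = v := by
  ext i
  have hne : ∀ c' ∈ S, c' ≠ c := fun c' hc' h => hc (h ▸ hc')
  simp +contextual [matchingRows, Function.update_of_ne, hne, and_comm]

lemma card_matchingRows_eq_add {N k : ℕ} {Y : Fin N → Fin k → ℤ} (hpm : isPM Y)
    {S : Finset (Fin k)} {c : Fin k} (hc : c ∉ S) (ε : Fin k → ℤ) :
    #(matchingRows Y S ε) =
      #(matchingRows Y (insert c S) (Function.update ε c 1)) +
        #(matchingRows Y (insert c S) (Function.update ε c (-1))) := by
  rw [matchingRows_insert_update Y hc, matchingRows_insert_update Y hc,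
    ← card_filter_add_card_filter_not (fun i => Y i c = 1)]
  congr 2
  exact filter_congr fun i _ => by rcases hpm i c with h | h <;> simp [h]

lemma isOA2.card_matchingRows_mul_two_pow {N k t : ℕ} {Y : Fin N → Fin k → ℤ}
    (hpm : isPM Y) (hoa : isOA2 N k t Y) (htk : t ≤ k) {S : Finset (Fin k)} (hS : #S ≤ t)
    {ε : Fin k → ℤ} (hε : ∀ j, ε j = 1 ∨ ε j = -1) :
    #(matchingRows Y S ε) * 2 ^ #S = N := by
  obtain ⟨n, hn⟩ : ∃ n, #S + n = t := ⟨t - #S, by omega⟩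
  clear hS
  induction n generalizing S ε with
  | zero => subst hn; exact hoa S rfl ε hε
  | succ n ih =>
    obtain ⟨c, hc⟩ : ∃ c, c ∉ S := by
      by_contra! h
      have := card_le_univ S
      rw [eq_univ_iff_forall.mpr h, card_univ, Fintype.card_fin] at hn
      omega
    have hupd : ∀ v : ℤ, (v = 1 ∨ v = -1) → ∀ j,
        Function.update ε c v j = 1 ∨ Function.update ε c v j = -1 := by
      intro v hv j
      rcases eq_or_ne j c with rfl | h
      · simpa using hv
      · simpa [h] using hε j
    have hcard : #(insert c S) = #S + 1 := card_insert_of_notMem hc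
    have h₁ := ih (S := insert c S) (hupd 1 (.inl rfl)) (by omega)
    have h₂ := ih (S := insert c S) (hupd (-1) (.inr rfl)) (by omega)
    rw [hcard, pow_succ, ← mul_assoc] at h₁ h₂
    rw [card_matchingRows_eq_add hpm hc ε, add_mul]
    omega

lemma Jchar_eq_sum_powerset {N k : ℕ} {Y : Fin N → Fin k → ℤ} (hpm : isPM Y)
    (l : Finset (Fin k)) :
    Jchar Y l = ∑ S ∈ l.powerset, (-2) ^ #S * (#(matchingRows Y S fun _ => -1) : ℤ) := by
  have hrow : ∀ i, ∏ c ∈ l, Y i c =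
      ∑ S ∈ l.powerset, (-2) ^ #S * if ∀ c ∈ S, Y i c = -1 then 1 else 0 := by
    intro i
    have hY : ∀ c, Y i c = -2 * (if Y i c = -1 then 1 else 0) + 1 := fun c => by
      rcases hpm i c with h | h <;> simp [h]
    rw [prod_congr rfl fun c _ => hY c, prod_add]
    refine sum_congr rfl fun S _ => ?_
    rw [prod_const_one, mul_one, prod_mul_distrib, prod_const, prod_boole]
    congr
  simp only [Jchar, hrow]
  rw [sum_comm]
  refine sum_congr rfl fun S _ => ?_
  rw [← mul_sum, sum_boole, matchingRows]

lemma sum_powerset_filter_card_le_neg_one_pow {α : Type*} (l : Finset α) {t : ℕ}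
    (ht : t < #l) :
    ∑ S ∈ l.powerset with #S ≤ t, (-1 : ℤ) ^ #S = (-1) ^ t * (#l - 1).choose t := by
  obtain ⟨n, hn⟩ : ∃ n, #l = n + 1 := ⟨#l - 1, by omega⟩
  rw [sum_filter, sum_powerset_apply_card (fun m => if m ≤ t then (-1 : ℤ) ^ m else 0)]
  simp only [smul_ite, smul_zero, nsmul_eq_mul]
  rw [← sum_filter]
  have hrange : (range (#l + 1)).filter (· ≤ t) = range (t + 1) := by
    ext s; simp only [mem_filter, mem_range]; omega
  rw [hrange, hn, Nat.add_sub_cancel, ← Int.alternating_sum_range_choose_eq_choose]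
  exact sum_congr rfl fun _ _ => mul_comm _ _

lemma Jchar_sub_dvd {N k t : ℕ} {Y : Fin N → Fin k → ℤ} (hpm : isPM Y)
    (hoa : isOA2 N k t Y) (htk : t ≤ k) {l : Finset (Fin k)} (hl : t < #l) :
    2 ^ (t + 1) ∣ Jchar Y l - (-1) ^ t * (#l - 1).choose t * N := by
  rw [Jchar_eq_sum_powerset hpm, ← sum_filter_add_sum_filter_not _ (fun S => #S ≤ t)]
  have hlow : ∑ S ∈ l.powerset with #S ≤ t, (-2) ^ #S * (#(matchingRows Y S fun _ => -1) : ℤ)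
      = (-1) ^ t * (#l - 1).choose t * N := by
    rw [← sum_powerset_filter_card_le_neg_one_pow l hl, sum_mul]
    refine sum_congr rfl fun S hS => ?_
    have hcount : (#(matchingRows Y S fun _ => -1) : ℤ) * 2 ^ #S = N := by
      exact_mod_cast hoa.card_matchingRows_mul_two_pow hpm htk (mem_filter.mp hS).2
        fun _ => .inr rfl
    rw [← hcount, neg_pow]
    ring
  rw [hlow, add_sub_cancel_left]
  refine dvd_sum fun S hS => dvd_mul_of_dvd_left ?_ _
  rw [mem_filter, not_le] at hS
  exact (pow_dvd_pow 2 hS.2).trans (pow_dvd_pow_of_dvd (by norm_num) _)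

lemma two_pow_dvd_sq_of_dvd_sub_of_even {x u : ℤ} {t : ℕ} (h : 2 ^ (t + 1) ∣ x - 2 ^ t * u)
    (hu : Even u) : 2 ^ (2 * t + 2) ∣ x ^ 2 := by
  obtain ⟨v, rfl⟩ := hu
  have hx : 2 ^ (t + 1) ∣ x := by
    simpa using h.add (Dvd.intro v (by ring) : (2 : ℤ) ^ (t + 1) ∣ 2 ^ t * (v + v))
  have h2 := pow_dvd_pow_of_dvd hx 2
  rwa [← pow_mul, show (t + 1) * 2 = 2 * t + 2 by ring] at h2

lemma two_pow_dvd_sq_sub_of_dvd_sub_of_odd {x u : ℤ} {t : ℕ} (h : 2 ^ (t + 1) ∣ x - 2 ^ t * u)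
    (hu : Odd u) : 2 ^ (2 * t + 3) ∣ x ^ 2 - 2 ^ (2 * t) := by
  obtain ⟨m, hm⟩ := h
  have hx : x = 2 ^ t * (u + 2 * m) := by linear_combination hm
  obtain ⟨p, hp⟩ := Int.eight_dvd_sq_sub_one_of_odd (hu.add_even (even_two_mul m))
  exact ⟨p, by rw [hx]; linear_combination (2 : ℤ) ^ (2 * t) * hp⟩

lemma Ioa_of_lt {t j : ℕ} (h : t < j) :
    Ioa t j = if Odd ((j - 1).choose t) then 1 else 0 := by
  rw [Ioa, show j - t - 1 = j - 1 - t by omega, Nat.choose_symm (by omega)]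

lemma Jchar_sq_sub_dvd {N k t lam : ℕ} {Y : Fin N → Fin k → ℤ} (hpm : isPM Y)
    (hoa : isOA2 N k t Y) (htk : t ≤ k) (hN : N = lam * 2 ^ t) (hlam : Odd lam)
    {l : Finset (Fin k)} (hl : t < #l) :
    (phi2 t #l : ℤ) ∣ Jchar Y l ^ 2 - Ioa t #l * 2 ^ (2 * t) := by
  subst hN
  have h := Jchar_sub_dvd hpm hoa htk hl
  rw [show ((-1) ^ t * (#l - 1).choose t * (lam * 2 ^ t : ℕ) : ℤ) =
    2 ^ t * ((-1) ^ t * (#l - 1).choose t * lam) by push_cast; ring] at h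
  rw [phi2, Ioa_of_lt hl]
  split_ifs with hC
  · push_cast
    rw [one_mul]
    refine two_pow_dvd_sq_sub_of_dvd_sub_of_odd h ?_
    exact ((odd_neg_one.pow (n := t)).mul (by exact_mod_cast hC)).mul (by exact_mod_cast hlam)
  · simpa using two_pow_dvd_sq_of_dvd_sub_of_even h
      (((Int.even_coe_nat _).mpr (Nat.not_odd_iff_even.mp hC)).mul_left _ |>.mul_right _)

lemma card_filter_card_eq_and_notMem {α : Type*} [Fintype α] [DecidableEq α] (m : ℕ) (a : α) :
    #(univ.filter fun l : Finset α => #l = m ∧ a ∉ l) = (Fintype.card α - 1).choose m := by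
  have h : (univ.filter fun l : Finset α => #l = m ∧ a ∉ l) = (univ.erase a).powersetCard m := by
    ext l
    simp only [mem_filter, mem_univ, true_and, mem_powersetCard, subset_erase, subset_univ]
    tauto
  rw [h, card_powersetCard, card_erase_of_mem (mem_univ a), card_univ]

lemma sum_sq_Jchar_sub_phi1_dvd {N k t lam j : ℕ} {Y : Fin N → Fin k → ℤ} (hpm : isPM Y)
    (hoa : isOA2 N k t Y) (htk : t ≤ k) (hN : N = lam * 2 ^ t) (hlam : Odd lam)
    (hj : t < j) (i : Fin k) :
    (phi2 t j : ℤ) ∣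
      (∑ l ∈ univ.filter fun l : Finset (Fin k) => #l = j ∧ i ∉ l, Jchar Y l ^ 2) -
        phi1 (k - 1) t j := by
  have hsum : (phi1 (k - 1) t j : ℤ) =
      ∑ _l ∈ univ.filter fun l : Finset (Fin k) => #l = j ∧ i ∉ l, (Ioa t j * 2 ^ (2 * t) : ℤ) := by
    rw [sum_const, card_filter_card_eq_and_notMem, Fintype.card_fin, phi1, nsmul_eq_mul]
    push_cast
    ring
  rw [hsum, ← sum_sub_distrib]
  refine dvd_sum fun l hl => ?_
  obtain rfl := (mem_filter.mp hl).2.1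
  exact Jchar_sq_sub_dvd hpm hoa htk hN hlam hj

lemma sum_sum_filter_card_eq_and_notMem {α M : Type*} [Fintype α] [DecidableEq α]
    [AddCommMonoid M] (f : Finset α → M) (m : ℕ) :
    ∑ a, ∑ l ∈ univ.filter (fun l : Finset α => #l = m ∧ a ∉ l), f l =
      (Fintype.card α - m) • ∑ l ∈ univ.filter (fun l : Finset α => #l = m), f l := by
  calc ∑ a, ∑ l ∈ univ.filter (fun l : Finset α => #l = m ∧ a ∉ l), f l
      = ∑ a, ∑ l ∈ univ.filter (fun l : Finset α => #l = m), if a ∉ l then f l else 0 := by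
        simp only [sum_filter, ite_and]
    _ = ∑ l ∈ univ.filter (fun l : Finset α => #l = m), ∑ a, if a ∉ l then f l else 0 :=
        sum_comm
    _ = _ := by
        rw [smul_sum]
        refine sum_congr rfl fun l hl => ?_
        rw [← sum_filter, sum_const, ← (mem_filter.mp hl).2, ← card_compl]
        congr 2
        ext
        simp

lemma le_mul_floor_div_add {K : Type*} [Field K] [LinearOrder K] [IsStrictOrderedRing K]
    [FloorRing K] {A : ℤ} {c p : ℕ} {X : K} (hp : 0 < p) (hdvd : (p : ℤ) ∣ A - c)
    (hA : (A : K) ≤ X) :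
    A ≤ p * ⌊(X - c) / p⌋ + c := by
  obtain ⟨M, hM⟩ := hdvd
  have hM' : M ≤ ⌊(X - c) / p⌋ := by
    rw [Int.le_floor, le_div_iff₀ (by exact_mod_cast hp)]
    have : (A : K) = p * M + c := by exact_mod_cast (by linarith : A = p * M + c)
    linarith
  linarith [mul_le_mul_of_nonneg_left hM' (by positivity : (0 : ℤ) ≤ p)]

theorem stmt8_general (N k t lam r : ℕ) (Y : Fin N → Fin k → ℤ)
    (hpm : isPM Y) (hoa : isOA2 N k t Y)
    (hN : N = lam * 2 ^ t) (hlam : Odd lam)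
    (hr : 1 ≤ r) (hrk : t + r ≤ k - 1)
    (i : Fin k)
    (hmin : ∀ j' : Fin k,
      (∑ l ∈ Finset.univ.filter (fun l : Finset (Fin k) => l.card = t + r ∧ i ∉ l),
          (Jchar Y l) ^ 2) ≤
        ∑ l ∈ Finset.univ.filter (fun l : Finset (Fin k) => l.card = t + r ∧ j' ∉ l),
          (Jchar Y l) ^ 2) :
    (∑ l ∈ Finset.univ.filter (fun l : Finset (Fin k) => l.card = t + r ∧ i ∉ l),
        (Jchar Y l) ^ 2) ≤
      (phi2 t (t + r) : ℤ) *
          ⌊((((k : ℚ) - t - r) / k) *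
                ((∑ l ∈ Finset.univ.filter (fun l : Finset (Fin k) => l.card = t + r),
                  (Jchar Y l) ^ 2 : ℤ) : ℚ) -
              (phi1 (k - 1) t (t + r) : ℚ)) / (phi2 t (t + r) : ℚ)⌋ +
        (phi1 (k - 1) t (t + r) : ℤ) := by
  have hjk : t + r ≤ k := by omega
  refine le_mul_floor_div_add (by unfold phi2; positivity)
    (sum_sq_Jchar_sub_phi1_dvd hpm hoa (by omega) hN hlam (by omega) i) ?_
  set A := ∑ l ∈ univ.filter (fun l : Finset (Fin k) => #l = t + r ∧ i ∉ l), Jchar Y l ^ 2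
  set S := ∑ l ∈ univ.filter (fun l : Finset (Fin k) => #l = t + r), Jchar Y l ^ 2
  have hkA : #(univ : Finset (Fin k)) • A ≤ (k - (t + r)) • S :=
    (card_nsmul_le_sum univ _ A fun j' _ => hmin j').trans_eq <| by
      rw [sum_sum_filter_card_eq_and_notMem (fun l => Jchar Y l ^ 2) (t + r), Fintype.card_fin]
  rw [card_univ, Fintype.card_fin, nsmul_eq_mul, nsmul_eq_mul] at hkA
  qify [hjk] at hkA
  rw [div_mul_eq_mul_div, le_div_iff₀ (by exact_mod_cast (by omega : 0 < k))]
  linarith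

theorem stmt8 (N k t lam r : ℕ) (Y : Fin N → Fin k → ℤ)
    (hpm : isPM Y) (hoa : isOA2 N k t Y)
    (ht1 : 1 ≤ t) (htk : t ≤ k) (hN : N = lam * 2 ^ t) (hlam : Odd lam)
    (hk : t + 3 ≤ k) (hr : 1 ≤ r) (hrk : t + r ≤ k - 1)
    (i : Fin k)
    (hmin : ∀ j' : Fin k,
      (∑ l ∈ Finset.univ.filter (fun l : Finset (Fin k) => l.card = t + r ∧ i ∉ l),
          (Jchar Y l) ^ 2) ≤
        ∑ l ∈ Finset.univ.filter (fun l : Finset (Fin k) => l.card = t + r ∧ j' ∉ l),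
          (Jchar Y l) ^ 2) :
    (∑ l ∈ Finset.univ.filter (fun l : Finset (Fin k) => l.card = t + r ∧ i ∉ l),
        (Jchar Y l) ^ 2) ≤
      (phi2 t (t + r) : ℤ) *
          ⌊((((k : ℚ) - t - r) / k) *
                ((∑ l ∈ Finset.univ.filter (fun l : Finset (Fin k) => l.card = t + r),
                  (Jchar Y l) ^ 2 : ℤ) : ℚ) -
              (phi1 (k - 1) t (t + r) : ℚ)) / (phi2 t (t + r) : ℚ)⌋ +
        (phi1 (k - 1) t (t + r) : ℤ) :=
  stmt8_general N k t lam r Y hpm hoa hN hlam hr hrk i hmin
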